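/- arXiv:2301.01834 — 2 statements merged into one kernel-verified Lean document; each statement's English description precedes it below -/
import Mathlib

section
/- For k = 0 (and likewise for k = −1) the Jacobian determinant of g*(k) is a fifteenth power of the homogenizing hyperplane: there is a nonzero real constant c such that det Jac(g*(0)) = c·h¹⁵ in ℝ[l₀,l₁,r₀,r₁,h]. -/
open MvPolynomial

noncomputable section

/-- In `ℝ[l₀,l₁,r₀,r₁]` we take `l₀ = X 0`, `l₁ = X 1`, `r₀ = X 2`, `r₁ = X 3`.
`H₀(k; d₀,d₁) = 1 + (k−1)k·(d₀ + (k−2)(k+1)·(6 − 3(k−3)(k−1)k(k+2)·d₁)·d₁)`. -/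
def H₀ (k : ℝ) (d₀ d₁ : MvPolynomial (Fin 4) ℝ) : MvPolynomial (Fin 4) ℝ :=
  1 + C ((k - 1) * k) *
    (d₀ + C ((k - 2) * (k + 1)) * (6 - C (3 * (k - 3) * (k - 1) * k * (k + 2)) * d₁) * d₁)

/-- `H(k)`. -/
def Hp (k : ℝ) : MvPolynomial (Fin 4) ℝ :=
  C (1/2) * (H₀ k (X 0) (X 1) * H₀ (k + 1) (X 2) (X 3)
      + H₀ k (X 2) (X 3) * H₀ (k + 1) (X 0) (X 1))
    - C (36 * (k ^ 2 - 1) * k ^ 2) * (X 1 - X 3) ^ 2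

/-- `J₀(k; d₀,d₁)`. -/
def J₀ (k : ℝ) (d₀ d₁ : MvPolynomial (Fin 4) ℝ) : MvPolynomial (Fin 4) ℝ :=
  1 + C (k ^ 2 + k + 3) * d₀ + C (6 * (k ^ 4 + 2 * k ^ 3 + k ^ 2 + 6)) * d₁
    - C (3 * (k ^ 2 - 9) * (k ^ 2 - 4) * (k ^ 2 - 1) * k * (k + 4)) * d₁ ^ 2

/-- `J₁(k; d₀,d₁)`. -/
def J₁ (k : ℝ) (d₀ d₁ : MvPolynomial (Fin 4) ℝ) : MvPolynomial (Fin 4) ℝ :=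
  1 + C (k * (k + 1)) *
    (d₀ + C (3 * (k - 1) * (k + 2)) * (2 - C ((k - 2) * k * (k + 1) * (k + 3)) * d₁) * d₁)

/-- `J(k)`. -/
def Jp (k : ℝ) : MvPolynomial (Fin 4) ℝ :=
  C (1/2) * (J₀ k (X 0) (X 1) * J₁ k (X 2) (X 3) + J₀ k (X 2) (X 3) * J₁ k (X 0) (X 1))
    + C (108 * (k ^ 2 - 1) * k * (k + 2)) * (X 1 - X 3) ^ 2

/-- `K₀(k) = 1 − (3/2)(k²−1)k(k+2)(l₁+r₁)`. -/
def K₀ (k : ℝ) : MvPolynomial (Fin 4) ℝ :=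
  1 - C (3/2 * (k ^ 2 - 1) * k * (k + 2)) * (X 1 + X 3)

/-- `K(k) = (l₀−r₀)·K₀(k)·K₀(−k)`. -/
def Kp (k : ℝ) : MvPolynomial (Fin 4) ℝ := (X 0 - X 2) * K₀ k * K₀ (-k)

/-- `L(k)`. -/
def Lp (k : ℝ) : MvPolynomial (Fin 4) ℝ :=
  C (3/4 * k ^ 2) * (X 1 - X 3) *
    (C 16 + C (4 * (k ^ 2 - 1)) * (X 0 + X 2 - C (4 * (k ^ 2 - 1)) * (X 1 + X 3))
      - C (3 * (k ^ 2 - 4) * (k ^ 2 - 1) ^ 2) *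
        (C 3 * (X 0 * X 3) + C 3 * (X 1 * X 2) + X 0 * X 1 + X 2 * X 3
          + C (16 * (k ^ 2 - 6)) * (X 1 * X 3)))

/-- The (inhomogeneous) two-sided Krall–Jacobi map of rank 4:
`g(k) = (H(k) : K(k)+L(k) : J(k) : K(k+1)+L(k+1) : H(k+1))`. -/
def g (k : ℝ) : Fin 5 → MvPolynomial (Fin 4) ℝ :=
  ![Hp k, Kp k + Lp k, Jp k, Kp (k + 1) + Lp (k + 1), Hp (k + 1)]

/-- Homogenization to degree `n` with the extra variable `h = X 4`:
each monomial `m` of `p` is multiplied by `h^(n − deg m)`. -/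
def homog (n : ℕ) (p : MvPolynomial (Fin 4) ℝ) : MvPolynomial (Fin 5) ℝ :=
  p.support.sum fun m =>
    monomial (Finsupp.mapDomain Fin.castSucc m
        + Finsupp.single (4 : Fin 5) (n - m.sum fun _ e => e))
      (coeff m p)

/-- The homogenized map `g*(k)`: in `ℝ[l₀,l₁,r₀,r₁,h]` we take
`l₀ = X 0`, `l₁ = X 1`, `r₀ = X 2`, `r₁ = X 3`, `h = X 4`. -/
def gstar (k : ℝ) : Fin 5 → MvPolynomial (Fin 5) ℝ := fun i => homog 4 (g k i)

/-- The Jacobian determinant of a 5-tuple of polynomials in five variables. -/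
def jacDet (p : Fin 5 → MvPolynomial (Fin 5) ℝ) : MvPolynomial (Fin 5) ℝ :=
  Matrix.det (Matrix.of fun i j => pderiv j (p i))

/-- The left-right involution `LR` on `ℝ[l₀,l₁,r₀,r₁,h]`, swapping
`l₀ ↔ r₀`, `l₁ ↔ r₁` and fixing `h`. -/
def LR : MvPolynomial (Fin 5) ℝ →ₐ[ℝ] MvPolynomial (Fin 5) ℝ :=
  rename ![2, 3, 0, 1, 4]


end


-- ===== auxiliary material =====
section Auxiliary
open Matrix Finset
set_option maxHeartbeats 2000000

section DetAux
variable {R : Type*} [CommRing R]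

lemma sa4_0_0 : Fin.succAbove (0:Fin 4) (0:Fin 3) = 1 := rfl
lemma sa4_0_1 : Fin.succAbove (0:Fin 4) (1:Fin 3) = 2 := rfl
lemma sa4_0_2 : Fin.succAbove (0:Fin 4) (2:Fin 3) = 3 := rfl
lemma sa4_1_0 : Fin.succAbove (1:Fin 4) (0:Fin 3) = 0 := rfl
lemma sa4_1_1 : Fin.succAbove (1:Fin 4) (1:Fin 3) = 2 := rfl
lemma sa4_1_2 : Fin.succAbove (1:Fin 4) (2:Fin 3) = 3 := rfl
lemma sa4_2_0 : Fin.succAbove (2:Fin 4) (0:Fin 3) = 0 := rfl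
lemma sa4_2_1 : Fin.succAbove (2:Fin 4) (1:Fin 3) = 1 := rfl
lemma sa4_2_2 : Fin.succAbove (2:Fin 4) (2:Fin 3) = 3 := rfl
lemma sa4_3_0 : Fin.succAbove (3:Fin 4) (0:Fin 3) = 0 := rfl
lemma sa4_3_1 : Fin.succAbove (3:Fin 4) (1:Fin 3) = 1 := rfl
lemma sa4_3_2 : Fin.succAbove (3:Fin 4) (2:Fin 3) = 2 := rfl
lemma sa5_0_0 : Fin.succAbove (0:Fin 5) (0:Fin 4) = 1 := rfl
lemma sa5_0_1 : Fin.succAbove (0:Fin 5) (1:Fin 4) = 2 := rfl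
lemma sa5_0_2 : Fin.succAbove (0:Fin 5) (2:Fin 4) = 3 := rfl
lemma sa5_0_3 : Fin.succAbove (0:Fin 5) (3:Fin 4) = 4 := rfl
lemma sa5_1_0 : Fin.succAbove (1:Fin 5) (0:Fin 4) = 0 := rfl
lemma sa5_1_1 : Fin.succAbove (1:Fin 5) (1:Fin 4) = 2 := rfl
lemma sa5_1_2 : Fin.succAbove (1:Fin 5) (2:Fin 4) = 3 := rfl
lemma sa5_1_3 : Fin.succAbove (1:Fin 5) (3:Fin 4) = 4 := rfl
lemma sa5_2_0 : Fin.succAbove (2:Fin 5) (0:Fin 4) = 0 := rfl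
lemma sa5_2_1 : Fin.succAbove (2:Fin 5) (1:Fin 4) = 1 := rfl
lemma sa5_2_2 : Fin.succAbove (2:Fin 5) (2:Fin 4) = 3 := rfl
lemma sa5_2_3 : Fin.succAbove (2:Fin 5) (3:Fin 4) = 4 := rfl
lemma sa5_3_0 : Fin.succAbove (3:Fin 5) (0:Fin 4) = 0 := rfl
lemma sa5_3_1 : Fin.succAbove (3:Fin 5) (1:Fin 4) = 1 := rfl
lemma sa5_3_2 : Fin.succAbove (3:Fin 5) (2:Fin 4) = 2 := rfl
lemma sa5_3_3 : Fin.succAbove (3:Fin 5) (3:Fin 4) = 4 := rfl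
lemma sa5_4_0 : Fin.succAbove (4:Fin 5) (0:Fin 4) = 0 := rfl
lemma sa5_4_1 : Fin.succAbove (4:Fin 5) (1:Fin 4) = 1 := rfl
lemma sa5_4_2 : Fin.succAbove (4:Fin 5) (2:Fin 4) = 2 := rfl
lemma sa5_4_3 : Fin.succAbove (4:Fin 5) (3:Fin 4) = 3 := rfl
lemma fs3_0 : Fin.succ (0:Fin 3) = 1 := rfl
lemma fs3_1 : Fin.succ (1:Fin 3) = 2 := rfl
lemma fs3_2 : Fin.succ (2:Fin 3) = 3 := rfl
lemma fs4_0 : Fin.succ (0:Fin 4) = 1 := rfl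
lemma fs4_1 : Fin.succ (1:Fin 4) = 2 := rfl
lemma fs4_2 : Fin.succ (2:Fin 4) = 3 := rfl
lemma fs4_3 : Fin.succ (3:Fin 4) = 4 := rfl
lemma fv4_0 : ((0 : Fin 4) : ℕ) = 0 := rfl
lemma fv4_1 : ((1 : Fin 4) : ℕ) = 1 := rfl
lemma fv4_2 : ((2 : Fin 4) : ℕ) = 2 := rfl
lemma fv4_3 : ((3 : Fin 4) : ℕ) = 3 := rfl
lemma fv5_0 : ((0 : Fin 5) : ℕ) = 0 := rfl
lemma fv5_1 : ((1 : Fin 5) : ℕ) = 1 := rfl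
lemma fv5_2 : ((2 : Fin 5) : ℕ) = 2 := rfl
lemma fv5_3 : ((3 : Fin 5) : ℕ) = 3 := rfl
lemma fv5_4 : ((4 : Fin 5) : ℕ) = 4 := rfl

theorem det_fin_four (A : Matrix (Fin 4) (Fin 4) R) :
    det A = 0
      + A 0 0*A 1 1*A 2 2*A 3 3
      - A 0 0*A 1 1*A 2 3*A 3 2
      - A 0 0*A 1 2*A 2 1*A 3 3
      + A 0 0*A 1 2*A 2 3*A 3 1
      + A 0 0*A 1 3*A 2 1*A 3 2
      - A 0 0*A 1 3*A 2 2*A 3 1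
      - A 0 1*A 1 0*A 2 2*A 3 3
      + A 0 1*A 1 0*A 2 3*A 3 2
      + A 0 1*A 1 2*A 2 0*A 3 3
      - A 0 1*A 1 2*A 2 3*A 3 0
      - A 0 1*A 1 3*A 2 0*A 3 2
      + A 0 1*A 1 3*A 2 2*A 3 0
      + A 0 2*A 1 0*A 2 1*A 3 3
      - A 0 2*A 1 0*A 2 3*A 3 1
      - A 0 2*A 1 1*A 2 0*A 3 3
      + A 0 2*A 1 1*A 2 3*A 3 0
      + A 0 2*A 1 3*A 2 0*A 3 1
      - A 0 2*A 1 3*A 2 1*A 3 0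
      - A 0 3*A 1 0*A 2 1*A 3 2
      + A 0 3*A 1 0*A 2 2*A 3 1
      + A 0 3*A 1 1*A 2 0*A 3 2
      - A 0 3*A 1 1*A 2 2*A 3 0
      - A 0 3*A 1 2*A 2 0*A 3 1
      + A 0 3*A 1 2*A 2 1*A 3 0
 := by
  rw [det_succ_row_zero, Fin.sum_univ_four]
  simp only [det_fin_three, submatrix_apply, fs3_0, fs3_1, fs3_2, fv4_0, fv4_1, fv4_2, fv4_3,
    sa4_0_0, sa4_0_1, sa4_0_2, sa4_1_0, sa4_1_1, sa4_1_2, sa4_2_0, sa4_2_1, sa4_2_2, sa4_3_0, sa4_3_1, sa4_3_2]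
  norm_num
  ring

theorem det_fin_five (A : Matrix (Fin 5) (Fin 5) R) :
    det A = 0
      + A 0 0*A 1 1*A 2 2*A 3 3*A 4 4
      - A 0 0*A 1 1*A 2 2*A 3 4*A 4 3
      - A 0 0*A 1 1*A 2 3*A 3 2*A 4 4
      + A 0 0*A 1 1*A 2 3*A 3 4*A 4 2
      + A 0 0*A 1 1*A 2 4*A 3 2*A 4 3
      - A 0 0*A 1 1*A 2 4*A 3 3*A 4 2
      - A 0 0*A 1 2*A 2 1*A 3 3*A 4 4
      + A 0 0*A 1 2*A 2 1*A 3 4*A 4 3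
      + A 0 0*A 1 2*A 2 3*A 3 1*A 4 4
      - A 0 0*A 1 2*A 2 3*A 3 4*A 4 1
      - A 0 0*A 1 2*A 2 4*A 3 1*A 4 3
      + A 0 0*A 1 2*A 2 4*A 3 3*A 4 1
      + A 0 0*A 1 3*A 2 1*A 3 2*A 4 4
      - A 0 0*A 1 3*A 2 1*A 3 4*A 4 2
      - A 0 0*A 1 3*A 2 2*A 3 1*A 4 4
      + A 0 0*A 1 3*A 2 2*A 3 4*A 4 1
      + A 0 0*A 1 3*A 2 4*A 3 1*A 4 2
      - A 0 0*A 1 3*A 2 4*A 3 2*A 4 1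
      - A 0 0*A 1 4*A 2 1*A 3 2*A 4 3
      + A 0 0*A 1 4*A 2 1*A 3 3*A 4 2
      + A 0 0*A 1 4*A 2 2*A 3 1*A 4 3
      - A 0 0*A 1 4*A 2 2*A 3 3*A 4 1
      - A 0 0*A 1 4*A 2 3*A 3 1*A 4 2
      + A 0 0*A 1 4*A 2 3*A 3 2*A 4 1
      - A 0 1*A 1 0*A 2 2*A 3 3*A 4 4
      + A 0 1*A 1 0*A 2 2*A 3 4*A 4 3
      + A 0 1*A 1 0*A 2 3*A 3 2*A 4 4
      - A 0 1*A 1 0*A 2 3*A 3 4*A 4 2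
      - A 0 1*A 1 0*A 2 4*A 3 2*A 4 3
      + A 0 1*A 1 0*A 2 4*A 3 3*A 4 2
      + A 0 1*A 1 2*A 2 0*A 3 3*A 4 4
      - A 0 1*A 1 2*A 2 0*A 3 4*A 4 3
      - A 0 1*A 1 2*A 2 3*A 3 0*A 4 4
      + A 0 1*A 1 2*A 2 3*A 3 4*A 4 0
      + A 0 1*A 1 2*A 2 4*A 3 0*A 4 3
      - A 0 1*A 1 2*A 2 4*A 3 3*A 4 0
      - A 0 1*A 1 3*A 2 0*A 3 2*A 4 4
      + A 0 1*A 1 3*A 2 0*A 3 4*A 4 2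
      + A 0 1*A 1 3*A 2 2*A 3 0*A 4 4
      - A 0 1*A 1 3*A 2 2*A 3 4*A 4 0
      - A 0 1*A 1 3*A 2 4*A 3 0*A 4 2
      + A 0 1*A 1 3*A 2 4*A 3 2*A 4 0
      + A 0 1*A 1 4*A 2 0*A 3 2*A 4 3
      - A 0 1*A 1 4*A 2 0*A 3 3*A 4 2
      - A 0 1*A 1 4*A 2 2*A 3 0*A 4 3
      + A 0 1*A 1 4*A 2 2*A 3 3*A 4 0
      + A 0 1*A 1 4*A 2 3*A 3 0*A 4 2
      - A 0 1*A 1 4*A 2 3*A 3 2*A 4 0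
      + A 0 2*A 1 0*A 2 1*A 3 3*A 4 4
      - A 0 2*A 1 0*A 2 1*A 3 4*A 4 3
      - A 0 2*A 1 0*A 2 3*A 3 1*A 4 4
      + A 0 2*A 1 0*A 2 3*A 3 4*A 4 1
      + A 0 2*A 1 0*A 2 4*A 3 1*A 4 3
      - A 0 2*A 1 0*A 2 4*A 3 3*A 4 1
      - A 0 2*A 1 1*A 2 0*A 3 3*A 4 4
      + A 0 2*A 1 1*A 2 0*A 3 4*A 4 3
      + A 0 2*A 1 1*A 2 3*A 3 0*A 4 4
      - A 0 2*A 1 1*A 2 3*A 3 4*A 4 0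
      - A 0 2*A 1 1*A 2 4*A 3 0*A 4 3
      + A 0 2*A 1 1*A 2 4*A 3 3*A 4 0
      + A 0 2*A 1 3*A 2 0*A 3 1*A 4 4
      - A 0 2*A 1 3*A 2 0*A 3 4*A 4 1
      - A 0 2*A 1 3*A 2 1*A 3 0*A 4 4
      + A 0 2*A 1 3*A 2 1*A 3 4*A 4 0
      + A 0 2*A 1 3*A 2 4*A 3 0*A 4 1
      - A 0 2*A 1 3*A 2 4*A 3 1*A 4 0
      - A 0 2*A 1 4*A 2 0*A 3 1*A 4 3
      + A 0 2*A 1 4*A 2 0*A 3 3*A 4 1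
      + A 0 2*A 1 4*A 2 1*A 3 0*A 4 3
      - A 0 2*A 1 4*A 2 1*A 3 3*A 4 0
      - A 0 2*A 1 4*A 2 3*A 3 0*A 4 1
      + A 0 2*A 1 4*A 2 3*A 3 1*A 4 0
      - A 0 3*A 1 0*A 2 1*A 3 2*A 4 4
      + A 0 3*A 1 0*A 2 1*A 3 4*A 4 2
      + A 0 3*A 1 0*A 2 2*A 3 1*A 4 4
      - A 0 3*A 1 0*A 2 2*A 3 4*A 4 1
      - A 0 3*A 1 0*A 2 4*A 3 1*A 4 2
      + A 0 3*A 1 0*A 2 4*A 3 2*A 4 1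
      + A 0 3*A 1 1*A 2 0*A 3 2*A 4 4
      - A 0 3*A 1 1*A 2 0*A 3 4*A 4 2
      - A 0 3*A 1 1*A 2 2*A 3 0*A 4 4
      + A 0 3*A 1 1*A 2 2*A 3 4*A 4 0
      + A 0 3*A 1 1*A 2 4*A 3 0*A 4 2
      - A 0 3*A 1 1*A 2 4*A 3 2*A 4 0
      - A 0 3*A 1 2*A 2 0*A 3 1*A 4 4
      + A 0 3*A 1 2*A 2 0*A 3 4*A 4 1
      + A 0 3*A 1 2*A 2 1*A 3 0*A 4 4
      - A 0 3*A 1 2*A 2 1*A 3 4*A 4 0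
      - A 0 3*A 1 2*A 2 4*A 3 0*A 4 1
      + A 0 3*A 1 2*A 2 4*A 3 1*A 4 0
      + A 0 3*A 1 4*A 2 0*A 3 1*A 4 2
      - A 0 3*A 1 4*A 2 0*A 3 2*A 4 1
      - A 0 3*A 1 4*A 2 1*A 3 0*A 4 2
      + A 0 3*A 1 4*A 2 1*A 3 2*A 4 0
      + A 0 3*A 1 4*A 2 2*A 3 0*A 4 1
      - A 0 3*A 1 4*A 2 2*A 3 1*A 4 0
      + A 0 4*A 1 0*A 2 1*A 3 2*A 4 3
      - A 0 4*A 1 0*A 2 1*A 3 3*A 4 2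
      - A 0 4*A 1 0*A 2 2*A 3 1*A 4 3
      + A 0 4*A 1 0*A 2 2*A 3 3*A 4 1
      + A 0 4*A 1 0*A 2 3*A 3 1*A 4 2
      - A 0 4*A 1 0*A 2 3*A 3 2*A 4 1
      - A 0 4*A 1 1*A 2 0*A 3 2*A 4 3
      + A 0 4*A 1 1*A 2 0*A 3 3*A 4 2
      + A 0 4*A 1 1*A 2 2*A 3 0*A 4 3
      - A 0 4*A 1 1*A 2 2*A 3 3*A 4 0
      - A 0 4*A 1 1*A 2 3*A 3 0*A 4 2
      + A 0 4*A 1 1*A 2 3*A 3 2*A 4 0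
      + A 0 4*A 1 2*A 2 0*A 3 1*A 4 3
      - A 0 4*A 1 2*A 2 0*A 3 3*A 4 1
      - A 0 4*A 1 2*A 2 1*A 3 0*A 4 3
      + A 0 4*A 1 2*A 2 1*A 3 3*A 4 0
      + A 0 4*A 1 2*A 2 3*A 3 0*A 4 1
      - A 0 4*A 1 2*A 2 3*A 3 1*A 4 0
      - A 0 4*A 1 3*A 2 0*A 3 1*A 4 2
      + A 0 4*A 1 3*A 2 0*A 3 2*A 4 1
      + A 0 4*A 1 3*A 2 1*A 3 0*A 4 2
      - A 0 4*A 1 3*A 2 1*A 3 2*A 4 0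
      - A 0 4*A 1 3*A 2 2*A 3 0*A 4 1
      + A 0 4*A 1 3*A 2 2*A 3 1*A 4 0
 := by
  rw [det_succ_row_zero, Fin.sum_univ_five]
  simp only [det_fin_four, submatrix_apply, fs4_0, fs4_1, fs4_2, fs4_3, fv5_0, fv5_1, fv5_2, fv5_3, fv5_4,
    sa5_0_0, sa5_0_1, sa5_0_2, sa5_0_3, sa5_1_0, sa5_1_1, sa5_1_2, sa5_1_3, sa5_2_0, sa5_2_1, sa5_2_2, sa5_2_3, sa5_3_0, sa5_3_1, sa5_3_2, sa5_3_3, sa5_4_0, sa5_4_1, sa5_4_2, sa5_4_3]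
  norm_num
  ring
end DetAux


open MvPolynomial

noncomputable section

abbrev P4 := MvPolynomial (Fin 4) ℝ
abbrev P5 := MvPolynomial (Fin 5) ℝ

lemma homog_eq_sum (n : ℕ) (p : P4) :
    homog n p = (AddMonoidAlgebra.coeff p).sum fun m c =>
      monomial (Finsupp.mapDomain Fin.castSucc m
        + Finsupp.single (4 : Fin 5) (n - m.sum fun _ e => e)) c := rfl

lemma homog_add (n : ℕ) (p q : P4) :
    homog n (p + q) = homog n p + homog n q := by
  simp only [homog_eq_sum]
  rw [AddMonoidAlgebra.coeff_add]
  exact Finsupp.sum_add_index' (fun m => by simp) (fun m b c => by simp [map_add])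

lemma homog_Cmul (n : ℕ) (a : ℝ) (p : P4) :
    homog n (C a * p) = C a * homog n p := by
  simp only [homog_eq_sum, ← smul_eq_C_mul]
  rw [AddMonoidAlgebra.coeff_smul]
  rw [Finsupp.sum_smul_index' (fun m => by simp), Finsupp.smul_sum]
  congr 1; funext m c
  simp [smul_monomial]

lemma homog_neg (n : ℕ) (p : P4) : homog n (-p) = - homog n p := by
  have h : (-p : P4) = C (-1) * p := by simp
  rw [h, homog_Cmul]; simp

lemma homog_sub (n : ℕ) (p q : P4) :
    homog n (p - q) = homog n p - homog n q := by
  rw [sub_eq_add_neg, homog_add, homog_neg, sub_eq_add_neg]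

lemma homog_monomial (n : ℕ) (m : Fin 4 →₀ ℕ) (c : ℝ) :
    homog n (monomial m c)
      = monomial (Finsupp.mapDomain Fin.castSucc m
          + Finsupp.single (4 : Fin 5) (n - m.sum fun _ e => e)) c := by
  classical
  rcases eq_or_ne c 0 with rfl | hc
  · simp [homog]
  · unfold homog
    rw [support_monomial, if_neg hc, Finset.sum_singleton, coeff_monomial, if_pos rfl]

lemma homog_one (n : ℕ) : homog n (1 : P4) = X 4 ^ n := by
  rw [show (1 : P4) = monomial 0 1 from rfl, homog_monomial]
  simp [X_pow_eq_monomial]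

lemma homog_X (i : Fin 4) : homog 4 (X i) = X i.castSucc * X 4 ^ 3 := by
  rw [show (X i : P4) = monomial (Finsupp.single i 1) 1 from rfl, homog_monomial]
  simp [Finsupp.mapDomain_single, Finsupp.sum_single_index]
  rw [monomial_single_add]
  simp [X_pow_eq_monomial]

lemma cs0 : Fin.castSucc (0 : Fin 4) = (0 : Fin 5) := rfl
lemma cs1 : Fin.castSucc (1 : Fin 4) = (1 : Fin 5) := rfl
lemma cs2 : Fin.castSucc (2 : Fin 4) = (2 : Fin 5) := rfl
lemma cs3 : Fin.castSucc (3 : Fin 4) = (3 : Fin 5) := rfl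

lemma hC2 : (C (1/2 : ℝ) : P4) * 2 = 1 := by
  rw [← map_ofNat (C : ℝ →+* P4) 2, ← C_mul]; norm_num
lemma hC34 : (C (3/4 : ℝ) : P4) * 16 = 12 := by
  rw [← map_ofNat (C : ℝ →+* P4) 16, ← C_mul, ← map_ofNat (C : ℝ →+* P4) 12]; norm_num

lemma hHp0 : Hp 0 = 1 := by unfold Hp H₀; norm_num [map_ofNat, hC2]
lemma hHp1 : Hp 1 = 1 + X 0 + X 2 := by
  unfold Hp H₀; norm_num [map_ofNat]; linear_combination (1 + X 0 + X 2 : P4) * hC2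
lemma hHpm1 : Hp (-1) = 1 + X 0 + X 2 := by
  unfold Hp H₀; norm_num [map_ofNat]; linear_combination (1 + X 0 + X 2 : P4) * hC2
lemma hJp0 : Jp 0 = C (1/2) * (2 + 3 * X 0 + 3 * X 2 + 36 * X 1 + 36 * X 3) := by
  unfold Jp J₀ J₁; norm_num [map_ofNat]; try ring
lemma hJpm1 : Jp (-1) = C (1/2) * (2 + 3 * X 0 + 3 * X 2 + 36 * X 1 + 36 * X 3) := by
  unfold Jp J₀ J₁; norm_num [map_ofNat]; try ring
lemma hKL0 : Kp 0 + Lp 0 = X 0 - X 2 := by unfold Kp Lp K₀; norm_num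
lemma hKL1 : Kp 1 + Lp 1 = X 0 - X 2 + 12 * (X 1 - X 3) := by
  unfold Kp Lp K₀; norm_num [map_ofNat]; linear_combination (X 1 - X 3 : P4) * hC34
lemma hKLm1 : Kp (-1) + Lp (-1) = X 0 - X 2 + 12 * (X 1 - X 3) := by
  unfold Kp Lp K₀; norm_num [map_ofNat]; linear_combination (X 1 - X 3 : P4) * hC34

def B0 : P5 := X 4 ^ 4
def B1 : P5 := X 0 * X 4 ^ 3 - X 2 * X 4 ^ 3
def B2 : P5 := C 2 * X 4 ^ 4 + C 3 * (X 0 * X 4 ^ 3) + C 3 * (X 2 * X 4 ^ 3)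
    + C 36 * (X 1 * X 4 ^ 3) + C 36 * (X 3 * X 4 ^ 3)
def B3 : P5 := X 0 * X 4 ^ 3 - X 2 * X 4 ^ 3 + C 12 * (X 1 * X 4 ^ 3 - X 3 * X 4 ^ 3)
def B4 : P5 := X 4 ^ 4 + X 0 * X 4 ^ 3 + X 2 * X 4 ^ 3

lemma homog_Hp0 : homog 4 (Hp 0) = B0 := by
  rw [hHp0, homog_one, B0]

lemma homog_KL0 : homog 4 (Kp 0 + Lp 0) = B1 := by
  rw [hKL0, homog_sub, homog_X, homog_X, cs0, cs2, B1]

lemma homog_Jp0 : homog 4 (Jp 0) = C (1/2) * B2 := by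
  rw [hJp0, show (2 + 3 * X 0 + 3 * X 2 + 36 * X 1 + 36 * X 3 : P4)
      = C 2 * 1 + C 3 * X 0 + C 3 * X 2 + C 36 * X 1 + C 36 * X 3 by
        simp [map_ofNat]; try ring]
  simp only [homog_Cmul, homog_add, homog_one, homog_X, cs0, cs1, cs2, cs3, B2]

lemma homog_KL1 : homog 4 (Kp 1 + Lp 1) = B3 := by
  rw [hKL1, show (X 0 - X 2 + 12 * (X 1 - X 3) : P4)
      = (X 0 - X 2) + C 12 * (X 1 - X 3) by simp [map_ofNat]]
  rw [homog_add, homog_sub, homog_Cmul, homog_sub, homog_X, homog_X, homog_X, homog_X,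
    cs0, cs1, cs2, cs3, B3]

lemma homog_Hp1 : homog 4 (Hp 1) = B4 := by
  rw [hHp1, homog_add, homog_add, homog_one, homog_X, homog_X, cs0, cs2, B4]

lemma homog_Jpm1 : homog 4 (Jp (-1)) = C (1/2) * B2 := by
  rw [hJpm1, show (2 + 3 * X 0 + 3 * X 2 + 36 * X 1 + 36 * X 3 : P4)
      = C 2 * 1 + C 3 * X 0 + C 3 * X 2 + C 36 * X 1 + C 36 * X 3 by
        simp [map_ofNat]; try ring]
  simp only [homog_Cmul, homog_add, homog_one, homog_X, cs0, cs1, cs2, cs3, B2]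

lemma homog_KLm1 : homog 4 (Kp (-1) + Lp (-1)) = B3 := by
  rw [hKLm1, show (X 0 - X 2 + 12 * (X 1 - X 3) : P4)
      = (X 0 - X 2) + C 12 * (X 1 - X 3) by simp [map_ofNat]]
  rw [homog_add, homog_sub, homog_Cmul, homog_sub, homog_X, homog_X, homog_X, homog_X,
    cs0, cs1, cs2, cs3, B3]

lemma homog_Hpm1 : homog 4 (Hp (-1)) = B4 := by
  rw [hHpm1, homog_add, homog_add, homog_one, homog_X, homog_X, cs0, cs2, B4]

lemma gstar_zero : gstar 0 = ![B0, B1, C (1/2) * B2, B3, B4] := by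
  funext i
  fin_cases i
  · exact homog_Hp0
  · exact homog_KL0
  · exact homog_Jp0
  · show homog 4 (Kp (0 + 1) + Lp (0 + 1)) = _
    rw [show (0 : ℝ) + 1 = 1 by norm_num]; exact homog_KL1
  · show homog 4 (Hp (0 + 1)) = _
    rw [show (0 : ℝ) + 1 = 1 by norm_num]; exact homog_Hp1

lemma gstar_negone : gstar (-1) = ![B4, B3, C (1/2) * B2, B1, B0] := by
  funext i
  fin_cases i
  · exact homog_Hpm1
  · exact homog_KLm1
  · exact homog_Jpm1
  · show homog 4 (Kp (-1 + 1) + Lp (-1 + 1)) = _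
    rw [show (-1 : ℝ) + 1 = 0 by norm_num]; exact homog_KL0
  · show homog 4 (Hp (-1 + 1)) = _
    rw [show (-1 : ℝ) + 1 = 0 by norm_num]; exact homog_Hp0

lemma cv5_0 (a b c d e : P5) : ![a,b,c,d,e] (0 : Fin 5) = a := rfl
lemma cv5_1 (a b c d e : P5) : ![a,b,c,d,e] (1 : Fin 5) = b := rfl
lemma cv5_2 (a b c d e : P5) : ![a,b,c,d,e] (2 : Fin 5) = c := rfl
lemma cv5_3 (a b c d e : P5) : ![a,b,c,d,e] (3 : Fin 5) = d := rfl
lemma cv5_4 (a b c d e : P5) : ![a,b,c,d,e] (4 : Fin 5) = e := rfl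

lemma half_det (b0 b1 b2 b3 b4 : P5) :
    jacDet ![b0, b1, C (1/2) * b2, b3, b4] = C (1/2) * jacDet ![b0, b1, b2, b3, b4] := by
  unfold jacDet
  have h1 : (Matrix.of fun i j => pderiv j (![b0, b1, C (1/2) * b2, b3, b4] i))
      = Matrix.updateRow (Matrix.of fun i j => pderiv j (![b0, b1, b2, b3, b4] i)) 2
          ((C (1/2) : P5) • fun j => pderiv j b2) := by
    ext i j
    fin_cases i <;>
      simp [Matrix.updateRow_apply, pderiv_C_mul, cv5_0, cv5_1, cv5_2, cv5_3, cv5_4]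
  rw [h1, Matrix.det_updateRow_smul]
  rw [show (fun j => pderiv j b2)
      = (Matrix.of fun i j => pderiv j (![b0, b1, b2, b3, b4] i)) 2 from rfl,
    Matrix.updateRow_eq_self]
  try rw [smul_eq_mul]

lemma detB : jacDet ![B0, B1, B2, B3, B4] = C 6912 * X 4 ^ 15 := by
  unfold jacDet
  rw [det_fin_five]
  simp only [Matrix.of_apply, cv5_0, cv5_1, cv5_2, cv5_3, cv5_4, B0, B1, B2, B3, B4,
    map_add, map_sub, pderiv_mul, pderiv_pow, pderiv_C_mul, pderiv_one, pderiv_C, pderiv_X_self,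
    pderiv_X_of_ne (by decide : (0:Fin 5) ≠ 1), pderiv_X_of_ne (by decide : (0:Fin 5) ≠ 2),
    pderiv_X_of_ne (by decide : (0:Fin 5) ≠ 3), pderiv_X_of_ne (by decide : (0:Fin 5) ≠ 4),
    pderiv_X_of_ne (by decide : (1:Fin 5) ≠ 0), pderiv_X_of_ne (by decide : (1:Fin 5) ≠ 2),
    pderiv_X_of_ne (by decide : (1:Fin 5) ≠ 3), pderiv_X_of_ne (by decide : (1:Fin 5) ≠ 4),
    pderiv_X_of_ne (by decide : (2:Fin 5) ≠ 0), pderiv_X_of_ne (by decide : (2:Fin 5) ≠ 1),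
    pderiv_X_of_ne (by decide : (2:Fin 5) ≠ 3), pderiv_X_of_ne (by decide : (2:Fin 5) ≠ 4),
    pderiv_X_of_ne (by decide : (3:Fin 5) ≠ 0), pderiv_X_of_ne (by decide : (3:Fin 5) ≠ 1),
    pderiv_X_of_ne (by decide : (3:Fin 5) ≠ 2), pderiv_X_of_ne (by decide : (3:Fin 5) ≠ 4),
    pderiv_X_of_ne (by decide : (4:Fin 5) ≠ 0), pderiv_X_of_ne (by decide : (4:Fin 5) ≠ 1),
    pderiv_X_of_ne (by decide : (4:Fin 5) ≠ 2), pderiv_X_of_ne (by decide : (4:Fin 5) ≠ 3)]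
  simp only [map_ofNat, Nat.cast_ofNat]
  norm_num
  ring

lemma detB' : jacDet ![B4, B3, B2, B1, B0] = C 6912 * X 4 ^ 15 := by
  unfold jacDet
  rw [det_fin_five]
  simp only [Matrix.of_apply, cv5_0, cv5_1, cv5_2, cv5_3, cv5_4, B0, B1, B2, B3, B4,
    map_add, map_sub, pderiv_mul, pderiv_pow, pderiv_C_mul, pderiv_one, pderiv_C, pderiv_X_self,
    pderiv_X_of_ne (by decide : (0:Fin 5) ≠ 1), pderiv_X_of_ne (by decide : (0:Fin 5) ≠ 2),
    pderiv_X_of_ne (by decide : (0:Fin 5) ≠ 3), pderiv_X_of_ne (by decide : (0:Fin 5) ≠ 4),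
    pderiv_X_of_ne (by decide : (1:Fin 5) ≠ 0), pderiv_X_of_ne (by decide : (1:Fin 5) ≠ 2),
    pderiv_X_of_ne (by decide : (1:Fin 5) ≠ 3), pderiv_X_of_ne (by decide : (1:Fin 5) ≠ 4),
    pderiv_X_of_ne (by decide : (2:Fin 5) ≠ 0), pderiv_X_of_ne (by decide : (2:Fin 5) ≠ 1),
    pderiv_X_of_ne (by decide : (2:Fin 5) ≠ 3), pderiv_X_of_ne (by decide : (2:Fin 5) ≠ 4),
    pderiv_X_of_ne (by decide : (3:Fin 5) ≠ 0), pderiv_X_of_ne (by decide : (3:Fin 5) ≠ 1),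
    pderiv_X_of_ne (by decide : (3:Fin 5) ≠ 2), pderiv_X_of_ne (by decide : (3:Fin 5) ≠ 4),
    pderiv_X_of_ne (by decide : (4:Fin 5) ≠ 0), pderiv_X_of_ne (by decide : (4:Fin 5) ≠ 1),
    pderiv_X_of_ne (by decide : (4:Fin 5) ≠ 2), pderiv_X_of_ne (by decide : (4:Fin 5) ≠ 3)]
  simp only [map_ofNat, Nat.cast_ofNat]
  norm_num
  ring

lemma final0 : jacDet (gstar 0) = C 3456 * X 4 ^ 15 := by
  rw [gstar_zero, half_det, detB, ← mul_assoc, ← C_mul]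
  norm_num

lemma finalm1 : jacDet (gstar (-1)) = C 3456 * X 4 ^ 15 := by
  rw [gstar_negone, half_det, detB', ← mul_assoc, ← C_mul]
  norm_num

end
end Auxiliary

open MvPolynomial in
/-- For `k = 0` (and likewise `k = −1`) the Jacobian determinant of `g*(k)` is a
nonzero constant times the fifteenth power of the homogenizing hyperplane `h`. -/
theorem jacDet_gstar_zero_h_pow_fifteen :
    (∃ c : ℝ, c ≠ 0 ∧ jacDet (gstar 0) = C c * (X 4) ^ 15) ∧
    (∃ c : ℝ, c ≠ 0 ∧ jacDet (gstar (-1)) = C c * (X 4) ^ 15) := by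
  exact ⟨⟨3456, by norm_num, final0⟩, ⟨3456, by norm_num, finalm1⟩⟩
end

section
/- The rank-4 two-sided Krall–Jacobi map satisfies the reflection symmetry g(R(k)) = ρ ∘ g(k) for the reflection R(k) = −1 − k: for every real number k one has the polynomial identities H(−1−k) = H(k+1), J(−1−k) = J(k) and (K(−1−k) + L(−1−k)) = (K(k+1) + L(k+1)) in ℝ[l₀,l₁,r₀,r₁]; consequently the 5-tuple g(−1−k) = (H(−1−k) : K(−1−k)+L(−1−k) : J(−1−k) : K(−k)+L(−k) : H(−k)) coincides with the 5-tuple g(k) written in reverse order, where ρ is the linear involution of ℝℙ⁴ reversing the order of the five homogeneous coordinates. -/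
open MvPolynomial

open MvPolynomial in

private lemma hH (k : ℝ) : Hp (-1 - k) = Hp (k + 1) := by
  simp only [Hp, H₀, map_mul, map_add, map_sub, map_neg, map_one, map_pow, map_ofNat]
  ring

private lemma hJ (k : ℝ) : Jp (-1 - k) = Jp k := by
  simp only [Jp, J₀, J₁, map_mul, map_add, map_sub, map_neg, map_one, map_pow, map_ofNat]
  ring

private lemma hKL (k : ℝ) : Kp (-1 - k) + Lp (-1 - k) = Kp (k + 1) + Lp (k + 1) := by
  simp only [Kp, Lp, K₀, map_mul, map_add, map_sub, map_neg, map_one, map_pow, map_ofNat]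
  ring


open MvPolynomial in
/-- The reflection symmetry `g(−1−k) = ρ ∘ g(k)` for `R(k) = −1−k`:
`H(−1−k) = H(k+1)`, `J(−1−k) = J(k)`, `K(−1−k)+L(−1−k) = K(k+1)+L(k+1)`, and the
5-tuple `g(−1−k)` is the 5-tuple `g(k)` in reverse order. -/
theorem g_reflection_symmetry_rank_four (k : ℝ) :
    Hp (-1 - k) = Hp (k + 1) ∧
    Jp (-1 - k) = Jp k ∧
    Kp (-1 - k) + Lp (-1 - k) = Kp (k + 1) + Lp (k + 1) ∧
    ∀ i : Fin 5, g (-1 - k) i = g k i.rev := by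
  refine ⟨hH k, hJ k, hKL k, ?_⟩
  intro i
  have h2 : Hp (-1 - k + 1) = Hp k := by
    have := hH (k - 1); rw [show -1 - (k - 1) = -1 - k + 1 by ring, show k - 1 + 1 = k by ring] at this
    exact this
  have h3 : Kp (-1 - k + 1) + Lp (-1 - k + 1) = Kp k + Lp k := by
    have := hKL (k - 1)
    rw [show -1 - (k - 1) = -1 - k + 1 by ring, show k - 1 + 1 = k by ring] at this
    exact this
  fin_cases i <;>
    simp [g, Fin.rev, hH k, hJ k, hKL k, h2, h3]
end
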